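/- arXiv:1607.08077 — 5 statements merged into one kernel-verified Lean document; each statement's English description precedes it below -/
import Mathlib

section
/- Let n ≥ 1 and 0 ≤ r ≤ n, let V = ∑_{i=0}^{r} C(n,i) be the cardinality of a Hamming ball of radius r in {0,1}^n, and let N = ⌈n·ln 2 · 2^n / V⌉. If N centers y_1, …, y_N are chosen independently and uniformly at random from {0,1}^n, then with positive probability the balls of radius r around these centers cover all of {0,1}^n. Consequently, {0,1}^n can be covered by at most ⌈n·ln 2 · 2^n / V⌉ Hamming balls of radius r. -/
/-!
Union bound, stated as counting: a point `x` of the cube misses all `N` centres for exactly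
`(2^n - V)^N` of the `2^(nN)` choices of centres, so if `2^n (2^n - V)^N < 2^(nN)` some choice
misses no point. With `p = V / 2^n` this reads `2^n (1 - p)^N < 1`, which follows from
`(1 - p)^N < e^{-pN} ≤ e^{-n log 2} = 2^{-n}` for `N ≥ n log 2 / p`.
-/

open Finset Fintype

theorem card_finset_card_le {ι : Type*} [Fintype ι] (r : ℕ) :
    #{s : Finset ι | #s ≤ r} = ∑ k ∈ range (r + 1), (card ι).choose k := by
  rw [card_eq_sum_card_fiberwise (f := Finset.card) (t := range (r + 1))]
  · refine sum_congr rfl fun k hk => ?_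
    rw [← card_univ, ← card_powersetCard, powersetCard_eq_filter, powerset_univ, filter_filter]
    congr 1
    ext s
    simp only [mem_range] at hk
    simp only [mem_filter, mem_univ, true_and]
    omega
  · intro s hs
    simp only [coe_filter, mem_univ, true_and, Set.mem_ofPred_eq] at hs
    simpa using Nat.lt_succ_of_le hs

theorem card_hammingDist_le {ι : Type*} [Fintype ι] [DecidableEq ι] (x : ι → Bool) (r : ℕ) :
    #{z | hammingDist x z ≤ r} = ∑ k ∈ range (r + 1), (card ι).choose k := by
  rw [← card_finset_card_le]
  have hdiff (s : Finset ι) : ({i | x i ≠ (x i ^^ decide (i ∈ s))} : Finset ι) = s := by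
    ext i
    by_cases hi : i ∈ s <;> simp [hi]
  refine card_nbij' (fun z => ({i | x i ≠ z i} : Finset ι))
    (fun s i => x i ^^ decide (i ∈ s)) ?_ ?_ ?_ ?_
  · intro z hz
    simpa [hammingDist] using hz
  · intro s hs
    simpa [hammingDist, hdiff] using hs
  · intro z _
    funext i
    simp only [mem_filter, mem_univ, true_and]
    generalize x i = a
    generalize z i = b
    cases a <;> cases b <;> rfl
  · intro s _
    exact hdiff s

theorem exists_cover_of_card_mul_pow_lt {α β : Type*} [Fintype α] [Fintype β]
    (R : α → β → Prop) [DecidableRel R] {m N : ℕ} (hm : ∀ x, #{y | ¬R x y} ≤ m)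
    (h : card α * m ^ N < card β ^ N) : ∃ y : Fin N → β, ∀ x, ∃ i, R x (y i) := by
  classical
  by_contra! hbad
  have hcover : (univ : Finset (Fin N → β)) ⊆
      univ.biUnion fun x => piFinset fun _ => ({y | ¬R x y} : Finset β) := by
    intro y _
    obtain ⟨x, hx⟩ := hbad y
    simpa using ⟨x, hx⟩
  have := calc card β ^ N = #(univ : Finset (Fin N → β)) := by simp
    _ ≤ _ := card_le_card hcover
    _ ≤ ∑ x, #(piFinset fun _ => ({y | ¬R x y} : Finset β)) := card_biUnion_le
    _ ≤ ∑ _x : α, m ^ N := by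
      gcongr with x
      simp only [card_piFinset, prod_const, card_univ, Fintype.card_fin]
      gcongr
      exact hm x
    _ = card α * m ^ N := by simp
  omega

theorem mul_sub_pow_lt_pow {M V : ℝ} {N : ℕ} (hV : 0 < V) (hVM : V ≤ M) (hM : 1 < M)
    (hN : Real.log M * M / V ≤ N) : M * (M - V) ^ N < M ^ N := by
  have hM0 : 0 < M := by linarith
  have hN0 : N ≠ 0 := by
    have : 0 < Real.log M * M / V := by have := Real.log_pos hM; positivity
    exact_mod_cast (this.trans_le hN).ne'
  set p := V / M with hp
  have hp0 : 0 < p := by positivity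
  have hp1 : 0 ≤ 1 - p := by rw [sub_nonneg, div_le_one hM0]; exact hVM
  have hlog : Real.log M ≤ p * N := by
    rw [hp, div_mul_eq_mul_div, le_div_iff₀ hM0]
    rwa [div_le_iff₀ hV, mul_comm (N : ℝ)] at hN
  have hpow := calc (1 - p) ^ N < Real.exp (-p) ^ N :=
        pow_lt_pow_left₀ (Real.one_sub_lt_exp_neg hp0.ne') hp1 hN0
    _ = Real.exp (-(p * N)) := by rw [← Real.exp_nat_mul]; ring_nf
    _ ≤ Real.exp (-Real.log M) := Real.exp_le_exp.2 (by linarith)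
    _ = M⁻¹ := by rw [Real.exp_neg, Real.exp_log hM0]
  have hsub : M - V = M * (1 - p) := by rw [hp]; field_simp
  calc M * (M - V) ^ N = M ^ N * (M * (1 - p) ^ N) := by rw [hsub, mul_pow]; ring
    _ < M ^ N * (M * M⁻¹) := by gcongr
    _ = M ^ N := by rw [mul_inv_cancel₀ hM0.ne', mul_one]

theorem stmt_7_general (n r : ℕ) (hn : 1 ≤ n) :
    ∃ y : Fin (⌈(n : ℝ) * Real.log 2 * 2 ^ n /
        ((∑ i ∈ Finset.range (r + 1), n.choose i : ℕ) : ℝ)⌉₊) → (Fin n → Bool),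
      ∀ x : Fin n → Bool, ∃ i, hammingDist x (y i) ≤ r := by
  set V := ∑ i ∈ range (r + 1), n.choose i
  have hcube : card (Fin n → Bool) = 2 ^ n := by simp
  have hball (x : Fin n → Bool) : #{z | hammingDist x z ≤ r} = V := by
    rw [card_hammingDist_le, Fintype.card_fin]
  have hV0 : 0 < V := hball 0 ▸ card_pos.2 ⟨0, by simp⟩
  have hVle : V ≤ 2 ^ n := by
    rw [← hcube, ← hball 0]
    exact card_le_univ _
  refine exists_cover_of_card_mul_pow_lt (fun x z => hammingDist x z ≤ r) (m := 2 ^ n - V)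
    (fun x => ?_) ?_
  · have := card_filter_add_card_filter_not (s := univ) (fun z => hammingDist x z ≤ r)
    rw [hball, card_univ, hcube] at this
    omega
  · have hN := mul_sub_pow_lt_pow (M := 2 ^ n) (V := V) (by exact_mod_cast hV0)
      (by exact_mod_cast hVle) (one_lt_pow₀ one_lt_two (by omega))
      (by rw [Real.log_pow]; exact Nat.le_ceil _)
    rw [hcube]
    exact_mod_cast hN

/-- The Boolean cube `{0,1}^n` can be covered by `⌈n·ln 2·2^n/V⌉` Hamming balls of
radius `r`, where `V` is the cardinality of such a ball. -/
theorem stmt_7 (n r : ℕ) (hn : 1 ≤ n) (hr : r ≤ n) :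
    ∃ y : Fin (⌈(n : ℝ) * Real.log 2 * 2 ^ n /
        ((∑ i ∈ Finset.range (r + 1), n.choose i : ℕ) : ℝ)⌉₊) → (Fin n → Bool),
      ∀ x : Fin n → Bool, ∃ i, hammingDist x (y i) ≤ r :=
  stmt_7_general n r hn
end

section
/- Let U be a finite set (the universe), T ⊆ U nonempty, and S a finite family of subsets of U such that every element of T belongs to at least μ ≥ 1 sets of S. Then there exists a subfamily G ⊆ S of size at most ⌈(|S|/μ) · ln|T|⌉ + 1 whose union contains T. -/
open scoped Classical

/-!
Double counting the incidences between `R ⊆ T` and the sets of `S` shows that some set meets at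
least a `μ / |S|` fraction of `R`. Greedily removing such a set `k` times leaves at most
`(1 - μ/|S|)^k |T| ≤ exp (-kμ/|S|) |T|` elements uncovered, and this is `< 1` once
`k > (|S|/μ) ln |T|`.
-/

open Finset

section GreedyCover

variable {U ι : Type*} [Fintype ι] [Nonempty ι] (S : ι → Finset U) (μ : ℕ)

theorem exists_mul_card_le_card_mul_card_inter (R : Finset U)
    (hR : ∀ x ∈ R, μ ≤ #{i | x ∈ S i}) :
    ∃ i, μ * #R ≤ Fintype.card ι * #(R ∩ S i) := by
  have hsum : μ * #R ≤ ∑ i, #(R ∩ S i) :=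
    calc μ * #R = ∑ _x ∈ R, μ := by rw [sum_const, smul_eq_mul, mul_comm]
      _ ≤ ∑ x ∈ R, #{i | x ∈ S i} := sum_le_sum hR
      _ = ∑ i, #(R ∩ S i) := by
        simp only [card_filter, ← filter_mem_eq_inter]
        exact sum_comm
  obtain ⟨i, -, hi⟩ := exists_le_of_sum_le univ_nonempty
    (f := fun _ => μ * #R) (g := fun i => Fintype.card ι * #(R ∩ S i))
    (by rw [sum_const, card_univ, smul_eq_mul, ← mul_sum]; exact Nat.mul_le_mul_left _ hsum)
  exact ⟨i, hi⟩

theorem exists_card_mul_card_sdiff_le (R : Finset U) (hR : ∀ x ∈ R, μ ≤ #{i | x ∈ S i}) :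
    ∃ i, Fintype.card ι * #(R \ S i) ≤ (Fintype.card ι - μ) * #R := by
  obtain ⟨i, hi⟩ := exists_mul_card_le_card_mul_card_inter S μ R hR
  refine ⟨i, ?_⟩
  have hsplit := congrArg (Fintype.card ι * ·) (card_inter_add_card_sdiff R (S i))
  simp only [mul_add] at hsplit
  rw [Nat.sub_mul]
  omega

theorem exists_card_le_and_card_pow_mul_card_sdiff_biUnion_le (T : Finset U)
    (hcov : ∀ x ∈ T, μ ≤ #{i | x ∈ S i}) (k : ℕ) :
    ∃ G : Finset ι, #G ≤ k ∧
      Fintype.card ι ^ k * #(T \ G.biUnion S) ≤ (Fintype.card ι - μ) ^ k * #T := by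
  induction k with
  | zero => exact ⟨∅, by simp, by simp⟩
  | succ k ih =>
    obtain ⟨G, hGk, hG⟩ := ih
    obtain ⟨i, hi⟩ := exists_card_mul_card_sdiff_le S μ (T \ G.biUnion S)
      fun x hx => hcov x (mem_sdiff.1 hx).1
    refine ⟨insert i G, (card_insert_le i G).trans (by omega), ?_⟩
    have hrem : T \ (insert i G).biUnion S = (T \ G.biUnion S) \ S i := by
      rw [biUnion_insert, sdiff_sdiff_left, union_comm]; rfl
    calc Fintype.card ι ^ (k + 1) * #(T \ (insert i G).biUnion S)
        = Fintype.card ι ^ k * (Fintype.card ι * #((T \ G.biUnion S) \ S i)) := by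
          rw [hrem, pow_succ, mul_assoc]
      _ ≤ Fintype.card ι ^ k * ((Fintype.card ι - μ) * #(T \ G.biUnion S)) :=
          Nat.mul_le_mul_left _ hi
      _ = (Fintype.card ι - μ) * (Fintype.card ι ^ k * #(T \ G.biUnion S)) := by ring
      _ ≤ (Fintype.card ι - μ) * ((Fintype.card ι - μ) ^ k * #T) := Nat.mul_le_mul_left _ hG
      _ = (Fintype.card ι - μ) ^ (k + 1) * #T := by ring

end GreedyCover

theorem sub_pow_mul_lt_pow {n μ t k : ℕ} (hμ : 0 < μ) (hμn : μ ≤ n) (ht : 0 < t)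
    (hk : (n / μ : ℝ) * Real.log t < k) : (n - μ) ^ k * t < n ^ k := by
  have hn : (0 : ℝ) < n := by exact_mod_cast hμ.trans_le hμn
  have hμ' : (0 : ℝ) < μ := by exact_mod_cast hμ
  have hexp : Real.exp (-(k * μ / n : ℝ)) * t < 1 := by
    have hlog : Real.log t < k * μ / n := by
      rw [lt_div_iff₀ hn]
      rwa [div_mul_eq_mul_div, div_lt_iff₀ hμ', mul_comm (n : ℝ)] at hk
    have ht' : (0 : ℝ) < t := by exact_mod_cast ht
    calc Real.exp (-(k * μ / n : ℝ)) * t < Real.exp (-Real.log t) * t := by gcongr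
      _ = 1 := by rw [Real.exp_neg, Real.exp_log ht', inv_mul_cancel₀ ht'.ne']
  have hratio : ((n : ℝ) - μ) ^ k ≤ n ^ k * Real.exp (-(k * μ / n : ℝ)) :=
    calc ((n : ℝ) - μ) ^ k = n ^ k * (1 - μ / n) ^ k := by
          rw [← mul_pow, mul_sub, mul_one, mul_div_cancel₀ _ hn.ne']
      _ ≤ n ^ k * Real.exp (-(μ / n)) ^ k := by
          gcongr
          · rw [sub_nonneg, div_le_one hn]; exact_mod_cast hμn
          · linarith [Real.add_one_le_exp (-(μ / n : ℝ))]
      _ = n ^ k * Real.exp (-(k * μ / n : ℝ)) := by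
          rw [← Real.exp_nat_mul, mul_neg, mul_div_assoc]
  have hreal : ((n : ℝ) - μ) ^ k * t < n ^ k :=
    calc ((n : ℝ) - μ) ^ k * t ≤ n ^ k * Real.exp (-(k * μ / n : ℝ)) * t := by gcongr
      _ < n ^ k := by rw [mul_assoc]; exact mul_lt_of_lt_one_right (by positivity) hexp
  have hcast : (((n - μ) ^ k * t : ℕ) : ℝ) < ((n ^ k : ℕ) : ℝ) := by
    push_cast [Nat.cast_sub hμn]
    exact hreal
  exact_mod_cast hcast

/-- Greedy set-cover bound: if every element of a nonempty finite set `T` belongs to at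
least `μ` sets of the family `S`, then some subfamily of size at most
`⌈(|S|/μ)·ln|T|⌉ + 1` covers `T`. -/
theorem stmt_8 {U ι : Type*} [Fintype U] [Fintype ι] (T : Finset U) (hT : T.Nonempty)
    (S : ι → Finset U) (μ : ℕ) (hμ : 1 ≤ μ)
    (hcov : ∀ x ∈ T, μ ≤ (Finset.univ.filter fun i : ι => x ∈ S i).card) :
    ∃ G : Finset ι,
      G.card ≤ ⌈((Fintype.card ι : ℝ) / μ) * Real.log T.card⌉₊ + 1 ∧
      ∀ x ∈ T, ∃ i ∈ G, x ∈ S i := by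
  obtain ⟨x₀, hx₀⟩ := hT
  have hμn : μ ≤ Fintype.card ι := (hcov x₀ hx₀).trans (card_filter_le _ _)
  have : Nonempty ι := Fintype.card_pos_iff.1 (hμ.trans hμn)
  set k := ⌈((Fintype.card ι : ℝ) / μ) * Real.log #T⌉₊ + 1
  obtain ⟨G, hGk, hG⟩ := exists_card_le_and_card_pow_mul_card_sdiff_biUnion_le S μ T hcov k
  have hlt := sub_pow_mul_lt_pow (t := #T) (k := k) hμ hμn (card_pos.2 ⟨x₀, hx₀⟩)
    (by push_cast [k]; linarith [Nat.le_ceil ((Fintype.card ι : ℝ) / μ * Real.log #T)])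
  have hempty : T \ G.biUnion S = ∅ := by
    refine card_eq_zero.1 (Nat.lt_one_iff.1 (Nat.lt_of_mul_lt_mul_left (a := Fintype.card ι ^ k) ?_))
    rw [mul_one]
    exact hG.trans_lt hlt
  refine ⟨G, hGk, fun x hx => ?_⟩
  simpa using (sdiff_eq_empty_iff_subset.1 hempty) hx
end

section
/- Let U be a finite universe with |U| = 2^n, let F = (A_1, …, A_M) be a finite list of subsets of U, and let k, with 2^k ≥ (n+1)·ln 2, be given. Then there exists a subfamily G ⊆ {A_1,…,A_M} with |G| ≤ ⌈2·(n+1)·ln 2 · M · 2^{-k}⌉ such that every element u ∈ U that belongs to at least 2^k of the sets A_1,…,A_M belongs to some set in G. -/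
/-!
Instead of selecting sets at random, select them greedily. If every element of a set `H` lies in
at least `d` of the `m` sets, double counting gives a set containing at least a `d / m` fraction
of `H`. Applying this to the still uncovered elements, after `t` selections at most
`|H| (1 - d / m) ^ t ≤ 2 ^ n e ^ (-d t / m)` elements remain uncovered, which is `< 1` as soon as
`d t / m ≥ 2 (n + 1) log 2 > n log 2`.
-/

open scoped Classical

open Finset Real

namespace GreedyCover

variable {ι U : Type*} [Fintype ι] (A : ι → Finset U)

noncomputable def uncovered (G : Finset ι) (H : Finset U) : Finset U :=
  H.filter fun u => ∀ i ∈ G, u ∉ A i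

lemma uncovered_insert (i : ι) (G : Finset ι) (H : Finset U) :
    uncovered A (insert i G) H = (uncovered A G H).filter fun u => u ∉ A i := by
  ext u
  simp only [uncovered, mem_filter, mem_insert, forall_eq_or_imp]
  tauto

variable {A} {d : ℕ} {H : Finset U}

lemma sum_card_filter_mem_eq :
    ∑ i, (H.filter fun u => u ∈ A i).card = ∑ u ∈ H, (univ.filter fun i => u ∈ A i).card := by
  simp only [card_filter]
  exact sum_comm

lemma exists_card_mul_le_card_mul [Nonempty ι]
    (hd : ∀ u ∈ H, d ≤ (univ.filter fun i => u ∈ A i).card) :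
    ∃ i, H.card * d ≤ Fintype.card ι * (H.filter fun u => u ∈ A i).card := by
  have hsum : ∑ _i : ι, H.card * d ≤ ∑ i, Fintype.card ι * (H.filter fun u => u ∈ A i).card :=
    calc ∑ _i : ι, H.card * d = Fintype.card ι * ∑ _u ∈ H, d := by simp [mul_comm]
      _ ≤ Fintype.card ι * ∑ i, (H.filter fun u => u ∈ A i).card := by
          rw [sum_card_filter_mem_eq]
          exact Nat.mul_le_mul_left _ (sum_le_sum hd)
      _ = _ := mul_sum _ _ _
  obtain ⟨i, -, hi⟩ := exists_le_of_sum_le univ_nonempty hsum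
  exact ⟨i, hi⟩

lemma exists_card_filter_not_mem_le (hd₀ : 0 < d) (hH : H.Nonempty)
    (hd : ∀ u ∈ H, d ≤ (univ.filter fun i => u ∈ A i).card) :
    ∃ i, ((H.filter fun u => u ∉ A i).card : ℝ) ≤ H.card * exp (-(d / Fintype.card ι)) := by
  obtain ⟨u, hu⟩ := hH
  obtain ⟨i₀, -⟩ := card_pos.mp (hd₀.trans_le (hd u hu))
  have hm : (0 : ℝ) < Fintype.card ι := by exact_mod_cast Fintype.card_pos_iff.mpr ⟨i₀⟩
  have : Nonempty ι := ⟨i₀⟩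
  obtain ⟨i, hi⟩ := exists_card_mul_le_card_mul hd
  refine ⟨i, ?_⟩
  have hsplit := card_filter_add_card_filter_not (s := H) (fun u => u ∈ A i)
  have hi' : (H.card : ℝ) * (d / Fintype.card ι) ≤ (H.filter fun u => u ∈ A i).card := by
    rw [← mul_div_assoc, div_le_iff₀ hm, mul_comm _ (Fintype.card ι : ℝ)]
    exact_mod_cast hi
  calc ((H.filter fun u => u ∉ A i).card : ℝ)
      = H.card - (H.filter fun u => u ∈ A i).card := by rw [← hsplit]; push_cast; ring
    _ ≤ H.card * (1 - d / Fintype.card ι) := by linarith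
    _ ≤ H.card * exp (-(d / Fintype.card ι)) := by
        gcongr
        linarith [add_one_le_exp (-(d / Fintype.card ι : ℝ))]

lemma exists_card_uncovered_le (hd₀ : 0 < d)
    (hd : ∀ u ∈ H, d ≤ (univ.filter fun i => u ∈ A i).card) (s : ℕ) :
    ∃ G : Finset ι, G.card ≤ s ∧
      ((uncovered A G H).card : ℝ) ≤ H.card * exp (-(d / Fintype.card ι * s)) := by
  induction s with
  | zero => exact ⟨∅, le_rfl, by simp [uncovered]⟩
  | succ s ih =>
    obtain ⟨G, hGs, hG⟩ := ih
    rcases (uncovered A G H).eq_empty_or_nonempty with hempty | hne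
    · exact ⟨G, hGs.trans s.le_succ, by simp only [hempty, card_empty, Nat.cast_zero]; positivity⟩
    have hd' : ∀ u ∈ uncovered A G H, d ≤ (univ.filter fun i => u ∈ A i).card :=
      fun u hu => hd u (mem_filter.mp hu).1
    obtain ⟨i, hi⟩ := exists_card_filter_not_mem_le hd₀ hne hd'
    refine ⟨insert i G, (card_insert_le i G).trans (by omega), ?_⟩
    calc ((uncovered A (insert i G) H).card : ℝ)
        ≤ (uncovered A G H).card * exp (-(d / Fintype.card ι)) := by
          rwa [uncovered_insert]
      _ ≤ H.card * exp (-(d / Fintype.card ι * s)) * exp (-(d / Fintype.card ι)) := by gcongr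
      _ = H.card * exp (-(d / Fintype.card ι * ↑(s + 1))) := by
          rw [mul_assoc, ← exp_add]; push_cast; ring_nf

theorem exists_cover (hd₀ : 0 < d) (hd : ∀ u ∈ H, d ≤ (univ.filter fun i => u ∈ A i).card)
    (s : ℕ) (hs : H.card * exp (-(d / Fintype.card ι * s)) < 1) :
    ∃ G : Finset ι, G.card ≤ s ∧ ∀ u ∈ H, ∃ i ∈ G, u ∈ A i := by
  obtain ⟨G, hGs, hG⟩ := exists_card_uncovered_le hd₀ hd s
  have hempty : uncovered A G H = ∅ := by
    rw [← card_eq_zero]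
    exact_mod_cast Nat.lt_one_iff.mp (by exact_mod_cast hG.trans_lt hs)
  refine ⟨G, hGs, fun u hu => ?_⟩
  by_contra! hcov
  have : u ∈ uncovered A G H := mem_filter.mpr ⟨hu, hcov⟩
  simp [hempty] at this

end GreedyCover

lemma two_pow_mul_exp_neg_ceil_lt_one (n M d : ℕ) (hM : 0 < M) (hd : 0 < d) :
    (2 : ℝ) ^ n * exp (-(d / M * ⌈2 * ((n : ℝ) + 1) * log 2 * M / d⌉₊)) < 1 := by
  have hlog : 0 < log 2 := log_pos one_lt_two
  have hexponent : 2 * ((n : ℝ) + 1) * log 2 ≤ d / M * ⌈2 * ((n : ℝ) + 1) * log 2 * M / d⌉₊ := by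
    calc 2 * ((n : ℝ) + 1) * log 2 = d / M * (2 * ((n : ℝ) + 1) * log 2 * M / d) := by
          field_simp
      _ ≤ _ := by gcongr; exact Nat.le_ceil _
  rw [← exp_log (by positivity : (0 : ℝ) < 2 ^ n), ← exp_add, exp_lt_one_iff, log_pow]
  nlinarith

theorem stmt_9_general (n M k : ℕ) {U : Type*} [Fintype U] (hU : Fintype.card U = 2 ^ n)
    (A : Fin M → Finset U) :
    ∃ G : Finset (Fin M),
      G.card ≤ ⌈2 * ((n : ℝ) + 1) * Real.log 2 * M / 2 ^ k⌉₊ ∧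
      ∀ u : U, 2 ^ k ≤ (Finset.univ.filter fun i : Fin M => u ∈ A i).card →
        ∃ i ∈ G, u ∈ A i := by
  rcases M.eq_zero_or_pos with rfl | hM
  · exact ⟨∅, by simp, fun u hu => absurd hu (by simp)⟩
  set H := univ.filter fun u : U => 2 ^ k ≤ (univ.filter fun i : Fin M => u ∈ A i).card
  have hH : (H.card : ℝ) ≤ 2 ^ n := by exact_mod_cast hU ▸ card_le_univ H
  obtain ⟨G, hG, hcov⟩ := GreedyCover.exists_cover (A := A) (H := H) (d := 2 ^ k)
    (by positivity) (fun u hu => (mem_filter.mp hu).2) _ <| by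
      have := two_pow_mul_exp_neg_ceil_lt_one n M (2 ^ k) hM (by positivity)
      rw [Fintype.card_fin]
      push_cast at this ⊢
      exact (mul_le_mul_of_nonneg_right hH (exp_pos _).le).trans_lt this
  exact ⟨G, hG, fun u hu => hcov u (mem_filter.mpr ⟨mem_univ u, hu⟩)⟩

/-- Offline marking-game lemma: from a list of `M` subsets of a universe of size `2^n`
one can select at most `⌈2(n+1)(ln 2)·M·2^{-k}⌉` sets so that every element belonging
to at least `2^k` of the listed sets belongs to a selected set. -/
theorem stmt_9 (n M k : ℕ) {U : Type*} [Fintype U] (hU : Fintype.card U = 2 ^ n)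
    (A : Fin M → Finset U) (hk : ((n : ℝ) + 1) * Real.log 2 ≤ 2 ^ k) :
    ∃ G : Finset (Fin M),
      G.card ≤ ⌈2 * ((n : ℝ) + 1) * Real.log 2 * M / 2 ^ k⌉₊ ∧
      ∀ u : U, 2 ^ k ≤ (Finset.univ.filter fun i : Fin M => u ∈ A i).card →
        ∃ i ∈ G, u ∈ A i :=
  stmt_9_general n M k hU A
end

section
/- Let U be a finite set, C a finite family of subsets of U each of cardinality at most s, and let N, t be natural numbers with t < N ≤ |U|. If |C| · C(N, t+1) · (s / (|U| − t))^{t+1} < 1, then there exists an N-element subset A ⊆ U such that |A ∩ C| ≤ t for every C ∈ C. -/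
open scoped Classical

open Finset
open scoped Nat

/-
Count the `N`-subsets of `U` instead of choosing one at random. An `N`-set meeting some `c ∈ C`
in more than `t` points contains a `(t+1)`-subset of `c`, and each `(t+1)`-set lies in
`choose (|U| - (t+1)) (N - (t+1))` of the `N`-sets, so the union bound over `c` and these
subsets counts the bad `N`-sets. Since
`choose s (t+1) ≤ choose |U| (t+1) · (s / (|U| - t))^(t+1)` and
`choose |U| N · choose N (t+1) = choose |U| (t+1) · choose (|U| - (t+1)) (N - (t+1))`,
the hypothesis implies that there are fewer bad `N`-sets than `N`-sets.
-/

section Counting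

variable {α : Type*} [DecidableEq α]

theorem card_powersetCard_filter_le_card_inter_le {S c : Finset α} (hcS : c ⊆ S) {k N : ℕ}
    (hkN : k ≤ N) :
    #{A ∈ S.powersetCard N | k ≤ #(A ∩ c)} ≤ (#c).choose k * (#S - k).choose (N - k) := by
  have hsub : {A ∈ S.powersetCard N | k ≤ #(A ∩ c)}
      ⊆ (c.powersetCard k).biUnion fun B => {A ∈ S.powersetCard N | B ⊆ A} := by
    intro A hA
    obtain ⟨hAN, hk⟩ := mem_filter.1 hA
    obtain ⟨B, hBA, hBk⟩ := exists_subset_card_eq hk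
    exact mem_biUnion.2 ⟨B, mem_powersetCard.2 ⟨hBA.trans inter_subset_right, hBk⟩,
      mem_filter.2 ⟨hAN, hBA.trans inter_subset_left⟩⟩
  calc _ ≤ _ := card_le_card hsub
    _ ≤ #(c.powersetCard k) * (#S - k).choose (N - k) := by
      refine card_biUnion_le_card_mul _ _ _ fun B hB => ?_
      obtain ⟨hBc, hBk⟩ := mem_powersetCard.1 hB
      rw [card_filter_powersetCard_subset B S N (hBc.trans hcS) (hBk ▸ hkN), hBk]
    _ = _ := by rw [card_powersetCard]

theorem card_powersetCard_filter_exists_le_card_inter_le {S : Finset α} {C : Finset (Finset α)}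
    (hCS : ∀ c ∈ C, c ⊆ S) {s k N : ℕ} (hs : ∀ c ∈ C, #c ≤ s) (hkN : k ≤ N) :
    #{A ∈ S.powersetCard N | ∃ c ∈ C, k ≤ #(A ∩ c)}
      ≤ #C * (s.choose k * (#S - k).choose (N - k)) := by
  have hsub : {A ∈ S.powersetCard N | ∃ c ∈ C, k ≤ #(A ∩ c)}
      ⊆ C.biUnion fun c => {A ∈ S.powersetCard N | k ≤ #(A ∩ c)} := by
    intro A hA
    obtain ⟨hAN, c, hc, hk⟩ := mem_filter.1 hA
    exact mem_biUnion.2 ⟨c, hc, mem_filter.2 ⟨hAN, hk⟩⟩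
  refine (card_le_card hsub).trans (card_biUnion_le_card_mul _ _ _ fun c hc => ?_)
  exact (card_powersetCard_filter_le_card_inter_le (hCS c hc) hkN).trans
    (Nat.mul_le_mul_right _ (Nat.choose_le_choose k (hs c hc)))

end Counting

theorem Nat.choose_succ_le_choose_succ_mul_div_pow {s u t : ℕ} (htu : t < u) :
    (s.choose (t + 1) : ℝ) ≤ u.choose (t + 1) * ((s : ℝ) / ((u : ℝ) - t)) ^ (t + 1) := by
  have hd : (0 : ℝ) < (u : ℝ) - t := sub_pos.2 (by exact_mod_cast htu)
  have hcast : (((u + 1 - (t + 1) : ℕ) : ℝ)) = (u : ℝ) - t := by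
    rw [show u + 1 - (t + 1) = u - t by omega, Nat.cast_sub htu.le]
  calc (s.choose (t + 1) : ℝ) ≤ (s : ℝ) ^ (t + 1) / (t + 1)! := Nat.choose_le_pow_div _ _
    _ = ((u : ℝ) - t) ^ (t + 1) / (t + 1)! * ((s : ℝ) / ((u : ℝ) - t)) ^ (t + 1) := by
      rw [div_pow]; field_simp
    _ ≤ _ := by
      gcongr
      simpa only [hcast] using Nat.pow_le_choose (α := ℝ) (t + 1) u

/-- In a large universe one can choose an `N`-element set with small intersection with
every set of a given small family of small sets. -/
theorem stmt_11 {U : Type*} [Fintype U] [DecidableEq U] (C : Finset (Finset U)) (s N t : ℕ)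
    (hs : ∀ c ∈ C, c.card ≤ s) (htN : t < N) (hNU : N ≤ Fintype.card U)
    (h : (C.card : ℝ) * (N.choose (t + 1)) *
        ((s : ℝ) / ((Fintype.card U : ℝ) - t)) ^ (t + 1) < 1) :
    ∃ A : Finset U, A.card = N ∧ ∀ c ∈ C, (A ∩ c).card ≤ t := by
  set u := Fintype.card U
  set M := (u - (t + 1)).choose (N - (t + 1))
  set r := ((s : ℝ) / ((u : ℝ) - t)) ^ (t + 1)
  have hbad := card_powersetCard_filter_exists_le_card_inter_le (S := univ)
    (fun c _ => subset_univ c) hs htN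
  have hchoose : (u.choose N : ℝ) * N.choose (t + 1) = u.choose (t + 1) * M := by
    exact_mod_cast Nat.choose_mul (n := u) htN
  have hlt : (#{A ∈ (univ : Finset U).powersetCard N | ∃ c ∈ C, t + 1 ≤ #(A ∩ c)} : ℝ)
      < #((univ : Finset U).powersetCard N) := by
    rw [card_powersetCard, card_univ]
    calc _ ≤ (#C : ℝ) * (s.choose (t + 1) * M) := by exact_mod_cast hbad
      _ ≤ #C * (u.choose (t + 1) * r * M) := by
        gcongr; exact Nat.choose_succ_le_choose_succ_mul_div_pow (htN.trans_le hNU)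
      _ = (#C * N.choose (t + 1) * r) * u.choose N := by
        linear_combination (#C * r : ℝ) * hchoose.symm
      _ < 1 * u.choose N := by gcongr; exact_mod_cast Nat.choose_pos hNU
      _ = u.choose N := one_mul _
  obtain ⟨A, hA, hgood⟩ := exists_mem_notMem_of_card_lt_card (by exact_mod_cast hlt)
  refine ⟨A, (mem_powersetCard.1 hA).2, fun c hc => ?_⟩
  by_contra! hc'
  exact hgood (mem_filter.2 ⟨hA, c, hc, hc'⟩)
end

section
/- Fix a real α ∈ (0, 1/2). There exists n₀ such that for all n ≥ n₀ the following holds: let r = ⌊α·n⌋, let V = ∑_{i=0}^{r} C(n,i), and let N = ⌊2^n / V⌋. Then there exists a set E ⊆ {0,1}^n with |E| = N such that every Hamming ball of radius r in {0,1}^n contains at most n elements of E. -/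
open scoped Classical

/-!
Counting replaces the random choice. Let `M = 2^n`. An `N`-subset with more than `n` points in a
ball `B` of size at most `V` contains one of the `C(V, n+1)` subsets of `B` of size `n + 1`, so at
most `C(V, n+1) C(M-n-1, N-n-1)` subsets are bad for `B`; summed over the `2^n` balls this stays
below `C(M, N)`. Via `C(M,N) C(N,k) = C(M,k) C(M-k,N-k)` and `k! C(a,k) ≤ a^k`, that inequality
reduces (using `VN ≤ M`) to `M^(n+2) < (n+1)! (M-n)^(n+1)`, which follows from `M ≤ 2 (M - n)`
and `2 ⋅ 4^n < (n+1)!`. When `N ≤ n` any `N`-subset works.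
-/

open Finset
open scoped Nat

theorem card_filter_hammingDist_le_le_sum_choose {ι : Type*} [Fintype ι] [DecidableEq ι]
    (y : ι → Bool) (r : ℕ) :
    #{x | hammingDist x y ≤ r} ≤ ∑ i ∈ range (r + 1), (Fintype.card ι).choose i := by
  let support (x : ι → Bool) : Finset ι := {j | x j ≠ y j}
  have hmaps : Set.MapsTo support ↑(univ.filter fun x => hammingDist x y ≤ r)
      ↑((range (r + 1)).biUnion fun i => powersetCard i (univ : Finset ι)) := by
    intro x hx
    rw [mem_coe, mem_filter] at hx
    simp only [mem_coe, mem_biUnion, mem_range, mem_powersetCard]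
    exact ⟨_, Nat.lt_succ_of_le hx.2, subset_univ _, rfl⟩
  have hinj : Set.InjOn support ↑(univ.filter fun x => hammingDist x y ≤ r) := by
    intro x₁ _ x₂ _ h
    funext j
    have hj := Finset.ext_iff.mp h j
    simp only [support, mem_filter, mem_univ, true_and] at hj
    revert hj
    cases x₁ j <;> cases x₂ j <;> cases y j <;> simp
  refine (card_le_card_of_injOn _ hmaps hinj).trans (card_biUnion_le.trans ?_)
  simp [card_powersetCard]

section Counting

variable {X : Type*} [Fintype X] [DecidableEq X]

theorem card_filter_powersetCard_lt_card_filter_le (p : X → Prop) [DecidablePred p] {k N : ℕ}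
    (hkN : k < N) :
    #{E ∈ powersetCard N univ | k < #(E.filter p)}
      ≤ (#(univ.filter p)).choose (k + 1) * (Fintype.card X - (k + 1)).choose (N - (k + 1)) := by
  have hcover : {E ∈ powersetCard N (univ : Finset X) | k < #(E.filter p)}
      ⊆ (powersetCard (k + 1) (univ.filter p)).biUnion
          fun T => {E ∈ powersetCard N (univ : Finset X) | T ⊆ E} := by
    intro E hE
    rw [mem_filter] at hE
    obtain ⟨T, hTE, hT⟩ := exists_subset_card_eq hE.2
    refine mem_biUnion.mpr ⟨T, mem_powersetCard.mpr ⟨hTE.trans ?_, hT⟩,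
      mem_filter.mpr ⟨hE.1, hTE.trans (filter_subset _ _)⟩⟩
    exact filter_subset_filter _ (subset_univ _)
  refine (card_le_card hcover).trans ?_
  rw [← card_powersetCard (k + 1) (univ.filter p)]
  refine card_biUnion_le_card_mul _ _ _ fun T hT => ?_
  rw [mem_powersetCard] at hT
  rw [card_filter_powersetCard_subset T univ N (subset_univ T) (hT.2 ▸ hkN), card_univ, hT.2]

theorem exists_card_eq_forall_card_filter_le {ι : Type*} [Fintype ι] (p : ι → X → Prop)
    [∀ i, DecidablePred (p i)] {k N V : ℕ} (hV : ∀ i, #(univ.filter (p i)) ≤ V)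
    (hkN : k < N)
    (hcount : Fintype.card ι * V.choose (k + 1) * (Fintype.card X - (k + 1)).choose (N - (k + 1))
      < (Fintype.card X).choose N) :
    ∃ E : Finset X, #E = N ∧ ∀ i, #(E.filter (p i)) ≤ k := by
  by_contra! hbad
  have hcover : powersetCard N univ
      ⊆ univ.biUnion fun i => {E ∈ powersetCard N univ | k < #(E.filter (p i))} := by
    intro E hE
    obtain ⟨i, hi⟩ := hbad E (mem_powersetCard.mp hE).2
    exact mem_biUnion.mpr ⟨i, mem_univ i, mem_filter.mpr ⟨hE, hi⟩⟩
  refine hcount.not_ge ?_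
  calc (Fintype.card X).choose N = #(powersetCard N (univ : Finset X)) := by simp
    _ ≤ #(univ : Finset ι) *
          (V.choose (k + 1) * (Fintype.card X - (k + 1)).choose (N - (k + 1))) :=
        (card_le_card hcover).trans <| card_biUnion_le_card_mul _ _ _ fun i _ =>
          (card_filter_powersetCard_lt_card_filter_le (p i) hkN).trans
            (Nat.mul_le_mul_right _ (Nat.choose_le_choose _ (hV i)))
    _ = _ := by rw [card_univ, mul_assoc]

end Counting

theorem Nat.mul_choose_sub_lt_choose_of_mul_choose_lt {a k N M : ℕ} (hkN : k ≤ N)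
    (hNM : N ≤ M) (h : a * N.choose k < M.choose k) :
    a * (M - k).choose (N - k) < M.choose N := by
  have hpos : 0 < (M - k).choose (N - k) := Nat.choose_pos (by omega)
  refine Nat.lt_of_mul_lt_mul_right (a := N.choose k) ?_
  calc a * (M - k).choose (N - k) * N.choose k = a * N.choose k * (M - k).choose (N - k) := by ring
    _ < M.choose k * (M - k).choose (N - k) := Nat.mul_lt_mul_of_pos_right h hpos
    _ = M.choose N * N.choose k := (Nat.choose_mul hkN).symm

theorem Nat.factorial_mul_choose_le_pow (a k : ℕ) : k ! * a.choose k ≤ a ^ k :=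
  Nat.descFactorial_eq_factorial_mul_choose a k ▸ Nat.descFactorial_le_pow a k

theorem Nat.two_mul_four_pow_lt_factorial {n : ℕ} (hn : 7 ≤ n) : 2 * 4 ^ n < (n + 1)! := by
  induction n, hn using Nat.le_induction with
  | base => decide
  | succ n _ ih =>
    rw [Nat.factorial_succ, pow_succ]
    nlinarith

theorem two_pow_mul_choose_mul_choose_lt_choose {n V N : ℕ} (hn : 7 ≤ n)
    (hVN : V * N ≤ 2 ^ n) :
    2 ^ n * V.choose (n + 1) * N.choose (n + 1) < (2 ^ n).choose (n + 1) := by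
  have hnM : 2 * n ≤ 2 ^ n := by
    have := Nat.lt_two_pow_self (n := n - 1)
    have : 2 ^ n = 2 * 2 ^ (n - 1) := by rw [← pow_succ']; congr 1; omega
    omega
  set M := 2 ^ n
  have hM : M ^ (n + 1) ≤ (2 * (M - n)) ^ (n + 1) := Nat.pow_le_pow_left (by omega) _
  have hlow : (M - n) ^ (n + 1) ≤ (n + 1)! * M.choose (n + 1) := by
    have := Nat.pow_sub_le_descFactorial M (n + 1)
    rwa [Nat.descFactorial_eq_factorial_mul_choose, Nat.add_sub_add_right] at this
  have hpos : 0 < (M - n) ^ (n + 1) := Nat.pow_pos (by omega)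
  refine Nat.lt_of_mul_lt_mul_left (a := (n + 1)! * (n + 1)!) ?_
  calc (n + 1)! * (n + 1)! * (M * V.choose (n + 1) * N.choose (n + 1))
      = M * (((n + 1)! * V.choose (n + 1)) * ((n + 1)! * N.choose (n + 1))) := by ring
    _ ≤ M * (V ^ (n + 1) * N ^ (n + 1)) := by
        gcongr <;> exact Nat.factorial_mul_choose_le_pow _ _
    _ = M * (V * N) ^ (n + 1) := by rw [mul_pow]
    _ ≤ M * M ^ (n + 1) := by gcongr
    _ ≤ M * (2 * (M - n)) ^ (n + 1) := by gcongr
    _ = (2 * 4 ^ n) * (M - n) ^ (n + 1) := by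
        rw [mul_pow, show (4 : ℕ) ^ n = M * M by rw [← mul_pow]; norm_num]; ring
    _ < (n + 1)! * (M - n) ^ (n + 1) :=
        Nat.mul_lt_mul_of_pos_right (Nat.two_mul_four_pow_lt_factorial hn) hpos
    _ ≤ (n + 1)! * ((n + 1)! * M.choose (n + 1)) := by gcongr
    _ = (n + 1)! * (n + 1)! * M.choose (n + 1) := by ring

theorem stmt_12_general (α : ℝ) :
    ∃ n₀ : ℕ, ∀ n ≥ n₀,
      ∃ E : Finset (Fin n → Bool),
        E.card = 2 ^ n / (∑ i ∈ Finset.range (⌊α * n⌋₊ + 1), n.choose i) ∧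
        ∀ y : Fin n → Bool,
          (E.filter fun x => hammingDist x y ≤ ⌊α * n⌋₊).card ≤ n := by
  refine ⟨7, fun n hn => ?_⟩
  set r := ⌊α * n⌋₊
  set V := ∑ i ∈ range (r + 1), n.choose i
  have hNM : 2 ^ n / V ≤ 2 ^ n := Nat.div_le_self _ _
  rcases le_or_gt (2 ^ n / V) n with hNn | hnN
  · obtain ⟨E, -, hE⟩ := exists_subset_card_eq (s := (univ : Finset (Fin n → Bool)))
      (by simpa using hNM)
    exact ⟨E, hE, fun y => (card_filter_le _ _).trans (hE ▸ hNn)⟩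
  · refine exists_card_eq_forall_card_filter_le (fun y x => hammingDist x y ≤ r) (V := V)
      (fun y => by simpa using card_filter_hammingDist_le_le_sum_choose y r) hnN ?_
    simpa using Nat.mul_choose_sub_lt_choose_of_mul_choose_lt hnN hNM
      (two_pow_mul_choose_mul_choose_lt_choose hn (Nat.mul_div_le (2 ^ n) V))

/-- Existence of list-decodable sets: for fixed `α ∈ (0,1/2)` and all large `n` there is
a set `E ⊆ {0,1}^n` of cardinality `⌊2^n/V⌋` such that every Hamming ball of radius
`⌊α·n⌋` contains at most `n` elements of `E`. -/
theorem stmt_12 (α : ℝ) (hα0 : 0 < α) (hα1 : α < 1 / 2) :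
    ∃ n₀ : ℕ, ∀ n ≥ n₀,
      ∃ E : Finset (Fin n → Bool),
        E.card = 2 ^ n / (∑ i ∈ Finset.range (⌊α * n⌋₊ + 1), n.choose i) ∧
        ∀ y : Fin n → Bool,
          (E.filter fun x => hammingDist x y ≤ ⌊α * n⌋₊).card ≤ n :=
  stmt_12_general α
end
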